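/- (Main theorem.) Fix λ ≥ 1 and let R = 2^λ, M = R/2. There exist R unitary R×R matrices A_0, ..., A_{R−1} and a vector s_0 ∈ ℂ^R such that: (i) A_k S(s) = S(s) A_k for all s ∈ ℂ^R and all 0 ≤ k < M; (ii) A_k · conj(S(s)) = S(s) · A_k for all s ∈ ℂ^R and all M ≤ k < R; and (iii) the initial matrix [A_0 s_0, ..., A_{M−1} s_0, A_M conj(s_0), ..., A_{R−1} conj(s_0)] is unitary. Hence the four-group decodable designs from extended Clifford algebras satisfy the extra conditions required of distributed differential space-time codes. -/

import Mathlib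

open Matrix

namespace DDSTC

/-- Index type `{0, ..., M-1}` with `M = 2^(λ-1)` (so `R = 2^λ = 2*M`,
and `R×R` matrices are indexed by `Idx lam ⊕ Idx lam`). -/
abbrev Idx (lam : ℕ) := Fin (2 ^ (lam - 1))

/-- Bitwise XOR `⊕` on `{0, ..., 2^(λ-1) - 1}`. -/
def fx {lam : ℕ} (i j : Idx lam) : Idx lam :=
  ⟨i.val ^^^ j.val, Nat.xor_lt_two_pow i.isLt j.isLt⟩

/-- The matrix `P_k ∈ M_M(ℂ)`, with `(P_k)_{ij} = 1` if `j = i ⊕ k` and `0` otherwise. -/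
def P {lam : ℕ} (k : Idx lam) : Matrix (Idx lam) (Idx lam) ℂ :=
  Matrix.of fun i j => if j = fx i k then 1 else 0

/-- The `R×R` design matrix `S(s) = [[C(s), -conj(D(s))], [D(s), conj(C(s))]]`
where `C(s)_{ij} = s_{i⊕j}` and `D(s)_{ij} = s_{M+(i⊕j)}`. -/
def Sdes {lam : ℕ} (s : Idx lam ⊕ Idx lam → ℂ) :
    Matrix (Idx lam ⊕ Idx lam) (Idx lam ⊕ Idx lam) ℂ :=
  Matrix.fromBlocks
    (Matrix.of fun i j => s (Sum.inl (fx i j)))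
    (-(Matrix.of fun i j => starRingEnd ℂ (s (Sum.inr (fx i j)))))
    (Matrix.of fun i j => s (Sum.inr (fx i j)))
    (Matrix.of fun i j => starRingEnd ℂ (s (Sum.inl (fx i j))))

/-- The relay matrices: `A_k = [[P_k, 0], [0, P_k]]` for `0 ≤ k < M` (index `Sum.inl k`)
and `A_{M+k} = [[0, -P_k], [P_k, 0]]` for `0 ≤ k < M` (index `Sum.inr k`). -/
def Arel {lam : ℕ} : Idx lam ⊕ Idx lam → Matrix (Idx lam ⊕ Idx lam) (Idx lam ⊕ Idx lam) ℂ
  | Sum.inl k => Matrix.fromBlocks (P k) 0 0 (P k)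
  | Sum.inr k => Matrix.fromBlocks 0 (-(P k)) (P k) 0

/-- The initial matrix `X_0 = [A_0 s_0, ..., A_{M-1} s_0, A_M conj(s_0), ..., A_{R-1} conj(s_0)]`
built from relay matrices `A` and initial vector `s_0`. -/
noncomputable def initMat {lam : ℕ}
    (A : Idx lam ⊕ Idx lam → Matrix (Idx lam ⊕ Idx lam) (Idx lam ⊕ Idx lam) ℂ)
    (s0 : Idx lam ⊕ Idx lam → ℂ) :
    Matrix (Idx lam ⊕ Idx lam) (Idx lam ⊕ Idx lam) ℂ :=
  Matrix.of fun i j =>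
    match j with
    | Sum.inl k => (A (Sum.inl k)).mulVec s0 i
    | Sum.inr k => (A (Sum.inr k)).mulVec (fun t => starRingEnd ℂ (s0 t)) i


/-!
The relay matrices are built from the permutation matrices `P k` of the translations
`i ↦ i ⊕ k` of `(ℤ/2)^(λ-1)`. Every block of `S(s)` is an XOR-circulant `f (i ⊕ j)`, and such
matrices commute with the translations because `⊕` is associative and commutative. The block
pattern `[[0, -P k], [P k, 0]]` of `A_{M+k}` exchanges `C` with `conj C` and `D` with `-conj D`,
which is exactly the effect of conjugating `S(s)`. With `s₀ = e₀` one gets `A_j s₀ = e_j`, so the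
initial matrix is the identity.
-/

section Xor

variable {lam : ℕ}

lemma fx_comm (i j : Idx lam) : fx i j = fx j i :=
  Fin.ext (Nat.xor_comm _ _)

lemma fx_assoc (i j k : Idx lam) : fx (fx i j) k = fx i (fx j k) :=
  Fin.ext (Nat.xor_assoc _ _ _)

lemma fx_fx_cancel_right (i k : Idx lam) : fx (fx i k) k = i :=
  Fin.ext (by simp [fx])

lemma eq_fx_iff (i j k : Idx lam) : j = fx i k ↔ i = fx j k := by
  constructor <;> rintro rfl <;> rw [fx_fx_cancel_right]

lemma fx_eq_zero_iff (i k : Idx lam) : fx i k = 0 ↔ i = k := by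
  simp [fx, Fin.ext_iff]

end Xor

section Translations

variable {lam : ℕ} {m n : Type*}

def xorCirculant (f : Idx lam → ℂ) : Matrix (Idx lam) (Idx lam) ℂ :=
  of fun i j => f (fx i j)

lemma P_mul (k : Idx lam) (A : Matrix (Idx lam) n ℂ) :
    P k * A = of fun i j => A (fx i k) j := by
  ext i j
  simp [mul_apply, P]

lemma mul_P [Fintype m] (k : Idx lam) (A : Matrix m (Idx lam) ℂ) :
    A * P k = of fun i j => A i (fx j k) := by
  ext i j
  rw [mul_apply, Finset.sum_eq_single (fx j k)]
  · simp [P, fx_fx_cancel_right]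
  · intro b _ hb
    simp [P, eq_fx_iff b j k, hb]
  · simp

lemma P_mul_xorCirculant (k : Idx lam) (f : Idx lam → ℂ) :
    P k * xorCirculant f = xorCirculant f * P k := by
  rw [P_mul, mul_P]
  ext i j
  simp [xorCirculant, fx_assoc, fx_comm k j]

lemma P_conjTranspose (k : Idx lam) : (P k)ᴴ = P k := by
  ext i j
  simp [P, eq_fx_iff i j k, apply_ite (star : ℂ → ℂ)]

lemma P_mul_self (k : Idx lam) : P k * P k = 1 := by
  rw [P_mul]
  ext i j
  simp [P, one_apply, fx_fx_cancel_right, eq_comm]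

end Translations

section Design

variable {lam : ℕ}

lemma Sdes_eq_fromBlocks (s : Idx lam ⊕ Idx lam → ℂ) :
    Sdes s = fromBlocks
      (xorCirculant fun t => s (Sum.inl t))
      (-xorCirculant fun t => starRingEnd ℂ (s (Sum.inr t)))
      (xorCirculant fun t => s (Sum.inr t))
      (xorCirculant fun t => starRingEnd ℂ (s (Sum.inl t))) := rfl

lemma Sdes_map_conj_eq_fromBlocks (s : Idx lam ⊕ Idx lam → ℂ) :
    (Sdes s).map (starRingEnd ℂ) = fromBlocks
      (xorCirculant fun t => starRingEnd ℂ (s (Sum.inl t)))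
      (-xorCirculant fun t => s (Sum.inr t))
      (xorCirculant fun t => starRingEnd ℂ (s (Sum.inr t)))
      (xorCirculant fun t => s (Sum.inl t)) := by
  ext (i | i) (j | j) <;> simp [Sdes, xorCirculant]

lemma Arel_conjTranspose_mul_self (j : Idx lam ⊕ Idx lam) : (Arel j)ᴴ * Arel j = 1 := by
  cases j <;> simp [Arel, fromBlocks_conjTranspose, fromBlocks_multiply, P_conjTranspose,
    P_mul_self, ← fromBlocks_one]

lemma Arel_inl_mul_Sdes (s : Idx lam ⊕ Idx lam → ℂ) (k : Idx lam) :
    Arel (Sum.inl k) * Sdes s = Sdes s * Arel (Sum.inl k) := by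
  simp [Arel, Sdes_eq_fromBlocks, fromBlocks_multiply, P_mul_xorCirculant]

lemma Arel_inr_mul_map_conj_Sdes (s : Idx lam ⊕ Idx lam → ℂ) (k : Idx lam) :
    Arel (Sum.inr k) * (Sdes s).map (starRingEnd ℂ) = Sdes s * Arel (Sum.inr k) := by
  rw [Sdes_map_conj_eq_fromBlocks, Sdes_eq_fromBlocks]
  simp [Arel, fromBlocks_multiply, P_mul_xorCirculant]

lemma initMat_Arel_single_zero : initMat (lam := lam) Arel (Pi.single (Sum.inl 0) 1) = 1 := by
  have hconj : (fun t => starRingEnd ℂ ((Pi.single (Sum.inl 0) 1 : Idx lam ⊕ Idx lam → ℂ) t)) =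
      Pi.single (Sum.inl 0) 1 := by
    ext t
    simp [Pi.single_apply, apply_ite (starRingEnd ℂ)]
  ext (i | i) (j | j) <;>
    simp only [initMat, of_apply, hconj, mulVec_single_one] <;>
    simp [Arel, P, one_apply, fx_eq_zero_iff, eq_comm]

end Design

theorem stmt6_general (lam : ℕ) :
    ∃ (A : Idx lam ⊕ Idx lam → Matrix (Idx lam ⊕ Idx lam) (Idx lam ⊕ Idx lam) ℂ)
      (s0 : Idx lam ⊕ Idx lam → ℂ),
      (∀ j, (A j)ᴴ * A j = 1) ∧
      (∀ (s : Idx lam ⊕ Idx lam → ℂ) (k : Idx lam),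
        A (Sum.inl k) * Sdes s = Sdes s * A (Sum.inl k)) ∧
      (∀ (s : Idx lam ⊕ Idx lam → ℂ) (k : Idx lam),
        A (Sum.inr k) * (Sdes s).map (starRingEnd ℂ) = Sdes s * A (Sum.inr k)) ∧
      (initMat A s0)ᴴ * initMat A s0 = 1 :=
  ⟨Arel, Pi.single (Sum.inl 0) 1, Arel_conjTranspose_mul_self, Arel_inl_mul_Sdes,
    Arel_inr_mul_map_conj_Sdes, by rw [initMat_Arel_single_zero, conjTranspose_one, one_mul]⟩

/-- main theorem: there exist `R` unitary `R×R` matrices `A_0, ..., A_{R-1}`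
(indexed by `Idx lam ⊕ Idx lam`) and a vector `s_0 ∈ ℂ^R` such that:
(i) `A_k S(s) = S(s) A_k` for all `s` and all `0 ≤ k < M`;
(ii) `A_k · conj(S(s)) = S(s) · A_k` for all `s` and all `M ≤ k < R`;
(iii) the initial matrix `[A_0 s_0, ..., A_{M-1} s_0, A_M conj(s_0), ..., A_{R-1} conj(s_0)]`
is unitary. -/
theorem stmt6 (lam : ℕ) (hlam : 1 ≤ lam) :
    ∃ (A : Idx lam ⊕ Idx lam → Matrix (Idx lam ⊕ Idx lam) (Idx lam ⊕ Idx lam) ℂ)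
      (s0 : Idx lam ⊕ Idx lam → ℂ),
      (∀ j, (A j)ᴴ * A j = 1) ∧
      (∀ (s : Idx lam ⊕ Idx lam → ℂ) (k : Idx lam),
        A (Sum.inl k) * Sdes s = Sdes s * A (Sum.inl k)) ∧
      (∀ (s : Idx lam ⊕ Idx lam → ℂ) (k : Idx lam),
        A (Sum.inr k) * (Sdes s).map (starRingEnd ℂ) = Sdes s * A (Sum.inr k)) ∧
      (initMat A s0)ᴴ * initMat A s0 = 1 :=
  stmt6_general lam
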